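/- Let n ≥ 1 and let A be a playable tournament payoff matrix of size 2n+1. Then: (a) for every k with 1 ≤ k ≤ n and every set S of k vertices, ∑_{i ∈ S} d⁺(i) ≥ k(k+1)/2 and ∑_{i ∈ S} d⁻(i) ≥ k(k+1)/2; (b) for every set S of n+1 vertices, ∑_{i ∈ S} d⁺(i) ≥ n(n+1)/2 + n and ∑_{i ∈ S} d⁻(i) ≥ n(n+1)/2 + n. Equivalently, the sum of the k smallest out-degrees (respectively in-degrees) is at least k(k+1)/2 for k ≤ n, and the sum of the n+1 smallest is at least n(n+1)/2 + n. -/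

import Mathlib

open Matrix

/-- A probability vector: nonnegative entries summing to `1`. -/
def IsProbVec {m : ℕ} (v : Fin m → ℝ) : Prop := (∀ i, 0 ≤ v i) ∧ ∑ i, v i = 1

/-- A tournament payoff matrix: zero diagonal, off-diagonal entries `±1`,
skew-symmetric. -/
def IsTournament {m : ℕ} (A : Matrix (Fin m) (Fin m) ℝ) : Prop :=
  (∀ i, A i i = 0) ∧ ∀ i j : Fin m, i ≠ j → (A i j = 1 ∨ A i j = -1) ∧ A j i = -A i j

/-- A tournament payoff matrix is playable if it admits a totally mixed symmetric Nash
equilibrium. -/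
def Playable {m : ℕ} (A : Matrix (Fin m) (Fin m) ℝ) : Prop :=
  ∃ v : Fin m → ℝ, IsProbVec v ∧ A.mulVec v = 0 ∧ ∀ i, 0 < v i

/-- The out-degree of vertex `i`: the number of vertices `i` beats. -/
noncomputable def outDeg {m : ℕ} (A : Matrix (Fin m) (Fin m) ℝ) (i : Fin m) : ℕ :=
  (Finset.univ.filter fun j => A i j = 1).card

/-- The in-degree of vertex `i`: the number of vertices beating `i`. -/
noncomputable def inDeg {m : ℕ} (A : Matrix (Fin m) (Fin m) ℝ) (i : Fin m) : ℕ :=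
  (Finset.univ.filter fun j => A i j = -1).card

/-!
Weight vertices by a totally mixed equilibrium `v`. Row `i` of `A v = 0` says that the
out-neighbours and the in-neighbours of `i` carry the same weight, so each carries less
than `1/2`. Hence if fewer than `|S|` arcs leave `S`, some vertex of `S` has all of `Sᶜ`
among its in-neighbours and `Sᶜ` weighs less than `1/2`; dually, if fewer than `|Sᶜ|` arcs
leave `S`, then `S` weighs less than `1/2`. Both cannot happen, so at least
`min |S| |Sᶜ|` arcs leave `S`, and the out-degrees on `S` sum to `C(|S|, 2)` (arcs inside
`S`) plus that number. In-degrees of `A` are out-degrees of the playable tournament `-A`.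
-/

open Finset

noncomputable def arcCount {m : ℕ} (A : Matrix (Fin m) (Fin m) ℝ) (S T : Finset (Fin m)) :
    ℕ :=
  ∑ i ∈ S, #{j ∈ T | A i j = 1}

section

variable {m : ℕ} {A : Matrix (Fin m) (Fin m) ℝ}

lemma outDeg_neg (i : Fin m) : outDeg (-A) i = inDeg A i := by
  simp only [outDeg, inDeg, Matrix.neg_apply, neg_eq_iff_eq_neg]

lemma IsTournament.neg (hA : IsTournament A) : IsTournament (-A) :=
  ⟨fun i => by simp [hA.1 i], fun i j hij => by
    rcases hA.2 i j hij with ⟨h | h, hji⟩ <;> simp [h, hji]⟩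

lemma neg_mulVec_eq_zero {v : Fin m → ℝ} (hAv : A *ᵥ v = 0) : (-A) *ᵥ v = 0 := by
  rw [Matrix.neg_mulVec, hAv, neg_zero]

lemma Playable.neg (hplay : Playable A) : Playable (-A) := by
  obtain ⟨v, hv, hAv, hpos⟩ := hplay
  exact ⟨v, hv, neg_mulVec_eq_zero hAv, hpos⟩

lemma IsTournament.apply_eq_one_iff (hA : IsTournament A) (i j : Fin m) :
    A j i = 1 ↔ A i j = -1 := by
  rcases eq_or_ne i j with rfl | hij
  · simp [hA.1 i]
  · rcases hA.2 i j hij with ⟨h | h, hji⟩ <;> norm_num [h, hji]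

lemma IsTournament.arcCount_neg (hA : IsTournament A) (S T : Finset (Fin m)) :
    arcCount (-A) S T = arcCount A T S := by
  simp only [arcCount, card_filter, Matrix.neg_apply, neg_eq_iff_eq_neg]
  rw [sum_comm]
  simp only [hA.apply_eq_one_iff]

lemma IsTournament.card_filter_add_card_filter (hA : IsTournament A) {S : Finset (Fin m)}
    {i : Fin m} (hi : i ∈ S) : #{j ∈ S | A i j = 1} + #{j ∈ S | A i j = -1} = #S - 1 := by
  rw [← card_union_of_disjoint, ← card_erase_of_mem hi]
  · congr 1
    ext j
    simp only [mem_union, mem_filter, mem_erase]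
    rcases eq_or_ne j i with rfl | hji
    · simp [hA.1 j]
    · have := (hA.2 i j hji.symm).1
      tauto
  · exact disjoint_filter.2 fun j _ h => by norm_num [h]

/-- The arcs of `A` inside `S` are those of `-A` reversed, and together they cover every
ordered pair of distinct vertices of `S`. -/
lemma IsTournament.arcCount_self (hA : IsTournament A) (S : Finset (Fin m)) :
    arcCount A S S = (#S).choose 2 := by
  have hsum : arcCount A S S + arcCount (-A) S S = #S * (#S - 1) := by
    simp only [arcCount, Matrix.neg_apply, neg_eq_iff_eq_neg, ← sum_add_distrib]
    rw [sum_congr rfl fun i hi => hA.card_filter_add_card_filter hi, sum_const, smul_eq_mul]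
  rw [hA.arcCount_neg] at hsum
  rw [Nat.choose_two_right]
  omega

lemma sum_outDeg_eq (hA : IsTournament A) (S : Finset (Fin m)) :
    ∑ i ∈ S, outDeg A i = (#S).choose 2 + arcCount A S Sᶜ := by
  rw [← hA.arcCount_self, arcCount, arcCount, ← sum_add_distrib]
  refine sum_congr rfl fun i _ => ?_
  simp only [outDeg, card_filter]
  exact (sum_add_sum_compl S _).symm

section Equilibrium

variable {v : Fin m → ℝ} (hA : IsTournament A) (hv : IsProbVec v) (hAv : A *ᵥ v = 0)
  (hpos : ∀ i, 0 < v i)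
include hA hv hAv hpos

lemma sum_filter_eq_one_lt_half (i : Fin m) : ∑ j with A i j = 1, v j < 1 / 2 := by
  have hpoint : ∀ j, v j + A i j * v j
      = 2 * (if A i j = 1 then v j else 0) + (if j = i then v j else 0) := by
    intro j
    rcases eq_or_ne j i with rfl | hji
    · simp [hA.1 j]
    · rcases (hA.2 i j hji.symm).1 with h | h <;> norm_num [h, hji, two_mul]
  have hrow : ∑ j, A i j * v j = 0 := congrFun hAv i
  have hsum := sum_congr rfl fun j (_ : j ∈ univ) => hpoint j
  rw [sum_add_distrib, sum_add_distrib, hv.2, hrow, ← mul_sum, ← sum_filter,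
    sum_ite_eq' univ i v, if_pos (mem_univ i)] at hsum
  linarith [hpos i]

lemma sum_compl_lt_half_of_arcCount_lt (S : Finset (Fin m)) (hS : arcCount A S Sᶜ < #S) :
    ∑ j ∈ Sᶜ, v j < 1 / 2 := by
  obtain ⟨i, hiS, hi⟩ : ∃ i ∈ S, #{j ∈ Sᶜ | A i j = 1} < 1 := by
    refine exists_lt_of_sum_lt ?_
    simpa [arcCount] using hS
  have hin : Sᶜ ⊆ ({j | (-A) i j = 1} : Finset (Fin m)) := by
    intro j hj
    have hji : j ≠ i := fun h => mem_compl.1 hj (h ▸ hiS)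
    have hnot : A i j ≠ 1 := fun h =>
      (card_pos.2 ⟨j, mem_filter.2 ⟨hj, h⟩⟩).ne' (Nat.lt_one_iff.1 hi)
    have := (hA.2 i j hji.symm).1
    simp only [mem_filter, mem_univ, true_and, Matrix.neg_apply, neg_eq_iff_eq_neg]
    tauto
  calc ∑ j ∈ Sᶜ, v j ≤ ∑ j with (-A) i j = 1, v j :=
        sum_le_sum_of_subset_of_nonneg hin fun j _ _ => (hpos j).le
    _ < 1 / 2 := sum_filter_eq_one_lt_half hA.neg hv (neg_mulVec_eq_zero hAv) hpos i

end Equilibrium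

lemma min_card_le_arcCount (hA : IsTournament A) (hplay : Playable A) (S : Finset (Fin m)) :
    min #S #Sᶜ ≤ arcCount A S Sᶜ := by
  obtain ⟨v, hv, hAv, hpos⟩ := hplay
  by_contra! h
  have hSc := sum_compl_lt_half_of_arcCount_lt hA hv hAv hpos S (h.trans_le (min_le_left _ _))
  have hS : ∑ j ∈ S, v j < 1 / 2 := by
    have hlt : arcCount (-A) Sᶜ Sᶜᶜ < #Sᶜ := by
      rw [compl_compl, hA.arcCount_neg]
      exact h.trans_le (min_le_right _ _)
    simpa using sum_compl_lt_half_of_arcCount_lt hA.neg hv (neg_mulVec_eq_zero hAv) hpos Sᶜ hlt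
  linarith [sum_add_sum_compl S v, hv.2]

lemma choose_two_add_min_le_sum_outDeg (hA : IsTournament A) (hplay : Playable A)
    (S : Finset (Fin m)) : (#S).choose 2 + min #S #Sᶜ ≤ ∑ i ∈ S, outDeg A i := by
  rw [sum_outDeg_eq hA]
  exact Nat.add_le_add_left (min_card_le_arcCount hA hplay S) _

end

theorem playable_degree_sum_bounds_general (n : ℕ)
    (A : Matrix (Fin (2 * n + 1)) (Fin (2 * n + 1)) ℝ)
    (hA : IsTournament A) (hplay : Playable A) :
    (∀ k : ℕ, 1 ≤ k → k ≤ n → ∀ S : Finset (Fin (2 * n + 1)), S.card = k →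
      k * (k + 1) / 2 ≤ ∑ i ∈ S, outDeg A i ∧ k * (k + 1) / 2 ≤ ∑ i ∈ S, inDeg A i) ∧
    (∀ S : Finset (Fin (2 * n + 1)), S.card = n + 1 →
      n * (n + 1) / 2 + n ≤ ∑ i ∈ S, outDeg A i ∧
      n * (n + 1) / 2 + n ≤ ∑ i ∈ S, inDeg A i) := by
  have hbound : ∀ S : Finset (Fin (2 * n + 1)),
      (#S).choose 2 + min #S #Sᶜ ≤ ∑ i ∈ S, outDeg A i ∧
        (#S).choose 2 + min #S #Sᶜ ≤ ∑ i ∈ S, inDeg A i := fun S =>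
    ⟨choose_two_add_min_le_sum_outDeg hA hplay S, by
      simpa only [outDeg_neg] using choose_two_add_min_le_sum_outDeg hA.neg hplay.neg S⟩
  have hcompl : ∀ S : Finset (Fin (2 * n + 1)), #Sᶜ = 2 * n + 1 - #S := fun S => by
    rw [card_compl, Fintype.card_fin]
  refine ⟨fun k _ hkn S hS => ?_, fun S hS => ?_⟩
  · have hk : k * (k + 1) / 2 = (#S).choose 2 + min #S #Sᶜ := by
      rw [hcompl, hS, min_eq_left (by omega), Nat.choose_two_right, ← Nat.triangle_succ,
        Nat.add_sub_cancel, mul_comm]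
    simpa only [hk] using hbound S
  · have hk : n * (n + 1) / 2 + n = (#S).choose 2 + min #S #Sᶜ := by
      rw [hcompl, hS, min_eq_right (by omega), Nat.choose_two_right, Nat.add_sub_cancel,
        mul_comm, show 2 * n + 1 - (n + 1) = n by omega]
    simpa only [hk] using hbound S

/-- Degree-sum lower bounds for playable `(2n+1)`-tournaments: every set of `k ≤ n`
vertices has out-degree (and in-degree) sum at least `k(k+1)/2`, and every set of
`n+1` vertices has out-degree (and in-degree) sum at least `n(n+1)/2 + n`. -/
theorem playable_degree_sum_bounds (n : ℕ) (hn : 1 ≤ n)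
    (A : Matrix (Fin (2 * n + 1)) (Fin (2 * n + 1)) ℝ)
    (hA : IsTournament A) (hplay : Playable A) :
    (∀ k : ℕ, 1 ≤ k → k ≤ n → ∀ S : Finset (Fin (2 * n + 1)), S.card = k →
      k * (k + 1) / 2 ≤ ∑ i ∈ S, outDeg A i ∧ k * (k + 1) / 2 ≤ ∑ i ∈ S, inDeg A i) ∧
    (∀ S : Finset (Fin (2 * n + 1)), S.card = n + 1 →
      n * (n + 1) / 2 + n ≤ ∑ i ∈ S, outDeg A i ∧
      n * (n + 1) / 2 + n ≤ ∑ i ∈ S, inDeg A i) :=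
  playable_degree_sum_bounds_general n A hA hplay
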